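/- arXiv:1301.4799 — 14 statements merged into one kernel-verified Lean document; each statement's English description precedes it below -/
import Mathlib

section
/- Let (A, ⟦·,·⟧, Q) be a ℤ₂-graded commutative algebra equipped with an odd Jacobi structure. Then the Loday–Poisson bracket {f,g} := (−1)^{|f|+1}⟦Q(f),g⟧ satisfies the Jacobi–Loday identity: for all homogeneous f, g, h ∈ A, {f,{g,h}} = {{f,g},h} + (−1)^{|f||g|} {g,{f,h}}. -/
/-- The sign `(−1)^i` for a parity `i ∈ ℤ₂`, as an integer. -/
def ksign (i : ZMod 2) : ℤ := (-1) ^ i.val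

/-- A ℤ₂-graded commutative ℝ-algebra `A = A₀ ⊕ A₁` (with unit `1 ∈ A₀` and
`f * g = (−1)^{|f||g|} g * f` for homogeneous `f`, `g`) equipped with an odd
Jacobi structure `(⟦·,·⟧, Q)`: an ℝ-bilinear bracket `br` of odd parity and an
ℝ-linear odd map `Q`, satisfying axioms (i)–(vii). -/
structure OddJacobiAlgebra (A : Type*) [Ring A] [Algebra ℝ A] where
  /-- the grading -/
  grade : ZMod 2 → Submodule ℝ A
  /-- `A = A₀ ⊕ A₁` -/
  internal : DirectSum.IsInternal grade
  /-- the unit is even -/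
  one_mem : (1 : A) ∈ grade 0
  /-- graded commutativity -/
  supercomm : ∀ (i j : ZMod 2) (f g : A), f ∈ grade i → g ∈ grade j →
    f * g = ksign (i * j) • (g * f)
  /-- the odd Jacobi bracket `⟦·,·⟧` -/
  br : A →ₗ[ℝ] A →ₗ[ℝ] A
  /-- the homological vector field `Q` -/
  Q : A →ₗ[ℝ] A
  /-- the bracket has odd parity -/
  br_parity : ∀ (i j : ZMod 2) (f g : A), f ∈ grade i → g ∈ grade j →
    br f g ∈ grade (i + j + 1)
  /-- `Q` has odd parity -/
  Q_parity : ∀ (i : ZMod 2) (f : A), f ∈ grade i → Q f ∈ grade (i + 1)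
  /-- (i) graded skewsymmetry of the bracket (with shifted parities) -/
  br_skew : ∀ (i j : ZMod 2) (f g : A), f ∈ grade i → g ∈ grade j →
    br f g = -(ksign ((i + 1) * (j + 1)) • br g f)
  /-- (ii) graded Jacobi identity (with shifted parities) -/
  br_jacobi : ∀ (i j k : ZMod 2) (f g h : A), f ∈ grade i → g ∈ grade j → h ∈ grade k →
    br f (br g h) = br (br f g) h + ksign ((i + 1) * (j + 1)) • br g (br f h)
  /-- (iii) modified Leibniz rule for the bracket -/
  br_leibniz : ∀ (i j k : ZMod 2) (f g h : A), f ∈ grade i → g ∈ grade j → h ∈ grade k →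
    br f (g * h) = br f g * h + ksign ((i + 1) * j) • (g * br f h) - br f 1 * (g * h)
  /-- (iv) `Q` is an odd derivation -/
  Q_der : ∀ (i j : ZMod 2) (f g : A), f ∈ grade i → g ∈ grade j →
    Q (f * g) = Q f * g + ksign i • (f * Q g)
  /-- (v) `Q` is homological: `Q ∘ Q = 0` -/
  Q_sq : ∀ f : A, Q (Q f) = 0
  /-- (vi) `Q(f) = (−1)^{|f|} ⟦f,1⟧` -/
  Q_br_one : ∀ (i : ZMod 2) (f : A), f ∈ grade i → Q f = ksign i • br f 1
  /-- (vii) `Q` is a Jacobi derivation of the bracket -/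
  Q_jacobi : ∀ (i j : ZMod 2) (f g : A), f ∈ grade i → g ∈ grade j →
    Q (br f g) = br (Q f) g + ksign (i + 1) • br f (Q g)

namespace OddJacobiAlgebra

variable {A : Type*} [Ring A] [Algebra ℝ A]

/-- The Loday–Poisson bracket `{f,g} := (−1)^{|f|+1} ⟦Q(f), g⟧`,
where `i` is the parity of the homogeneous element `f`. -/
def lp (J : OddJacobiAlgebra A) (i : ZMod 2) (f g : A) : A :=
  ksign (i + 1) • J.br (J.Q f) g

/-- The Hamiltonian operator `X_f(g) := (−1)^{|f|} ⟦f,g⟧ − Q(f) g` of a homogeneous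
element `f` of parity `i`, with respect to the odd Jacobi structure. -/
def X (J : OddJacobiAlgebra A) (i : ZMod 2) (f : A) : A → A :=
  fun g => ksign i • J.br f g - J.Q f * g

/-- The Hamiltonian operator `Y_f(g) := {f,g}` of a homogeneous element `f` of
parity `i`, with respect to the Loday–Poisson bracket. -/
def Y (J : OddJacobiAlgebra A) (i : ZMod 2) (f : A) : A → A :=
  fun g => J.lp i f g

/-- The derived product `f ∗ g := (−1)^{|f|+1} Q(f) g`, where `i` is the parity of `f`. -/
def dp (J : OddJacobiAlgebra A) (i : ZMod 2) (f g : A) : A :=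
  ksign (i + 1) • (J.Q f * g)

end OddJacobiAlgebra

/-- Supercommutator `[U,V] := U∘V − (−1)^{|U||V|} V∘U` of homogeneous operators
`U`, `V` of parities `pU`, `pV`. -/
def scomm {A : Type*} [Ring A] (pU pV : ZMod 2) (U V : A → A) : A → A :=
  fun h => U (V h) - ksign (pU * pV) • V (U h)

/-- The Loday–Poisson bracket satisfies the Jacobi–Loday identity:
`{f,{g,h}} = {{f,g},h} + (−1)^{|f||g|} {g,{f,h}}` for homogeneous `f,g,h`. -/
theorem lodayPoisson_jacobiLoday {A : Type*} [Ring A] [Algebra ℝ A]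
    (J : OddJacobiAlgebra A) (i j k : ZMod 2) (f g h : A)
    (hf : f ∈ J.grade i) (hg : g ∈ J.grade j) (hh : h ∈ J.grade k) :
    J.lp i f (J.lp j g h) =
      J.lp (i + j) (J.lp i f g) h + ksign (i * j) • J.lp j g (J.lp i f h) := by
  have hQf := J.Q_parity i f hf
  have hQg := J.Q_parity j g hg
  have hjac := J.br_jacobi (i+1) (j+1) k (J.Q f) (J.Q g) h hQf hQg hh
  have hQlp : J.Q (J.br (J.Q f) g) = ksign (i+1+1) • J.br (J.Q f) (J.Q g) := by
    rw [J.Q_jacobi (i+1) j (J.Q f) g hQf hg, J.Q_sq f]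
    simp
  simp only [OddJacobiAlgebra.lp, map_zsmul, LinearMap.smul_apply, hjac, hQlp, smul_add,
    smul_smul]
  congr 1
  · congr 1
    have : ∀ a b : ZMod 2, ksign (a+1) * ksign (b+1)
        = ksign (a+b+1) * (ksign (a+1) * ksign (a+1+1)) := by decide
    exact this i j
  · congr 1
    have : ∀ a b : ZMod 2, ksign (a+1) * (ksign (b+1) * ksign ((a+1+1)*(b+1+1)))
        = ksign (a*b) * (ksign (b+1) * ksign (a+1)) := by decide
    exact this i j
end

section
/- Let (A, ⟦·,·⟧, Q) be a ℤ₂-graded commutative algebra equipped with an odd Jacobi structure. Then the Loday–Poisson bracket {f,g} := (−1)^{|f|+1}⟦Q(f),g⟧ satisfies the left Leibniz rule: for all homogeneous f, g, h ∈ A, {f, gh} = {f,g} h + (−1)^{|f||g|} g {f,h}. -/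

lemma ksign_mul_self (t : ZMod 2) : ksign t * ksign t = 1 := by
  unfold ksign
  rw [← pow_add]
  exact Even.neg_one_pow ⟨t.val, rfl⟩

/-- The Loday–Poisson bracket satisfies the left Leibniz rule:
`{f, gh} = {f,g} h + (−1)^{|f||g|} g {f,h}` for homogeneous `f,g,h`. -/
theorem lodayPoisson_leftLeibniz {A : Type*} [Ring A] [Algebra ℝ A]
    (J : OddJacobiAlgebra A) (i j k : ZMod 2) (f g h : A)
    (hf : f ∈ J.grade i) (hg : g ∈ J.grade j) (hh : h ∈ J.grade k) :
    J.lp i f (g * h) = J.lp i f g * h + ksign (i * j) • (g * J.lp i f h) := by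
  have hQf : J.Q f ∈ J.grade (i + 1) := J.Q_parity i f hf
  have hbr1 : J.br (J.Q f) 1 = 0 := by
    have h1 : J.Q (J.Q f) = ksign (i + 1) • J.br (J.Q f) 1 := J.Q_br_one (i + 1) _ hQf
    rw [J.Q_sq] at h1
    have h2 := congrArg (fun x => ksign (i + 1) • x) h1.symm
    simp only [smul_smul, ksign_mul_self, one_smul, smul_zero] at h2
    exact h2
  have hL := J.br_leibniz (i + 1) j k (J.Q f) g h hQf hg hh
  have hij : (i + 1 + 1) * j = i * j := by
    have h2 : ∀ t : ZMod 2, t + 1 + 1 = t := by decide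
    rw [h2]
  unfold OddJacobiAlgebra.lp
  rw [hL, hbr1, hij]
  simp only [zero_mul, sub_zero, smul_add, smul_mul_assoc, mul_smul_comm, smul_smul,
    mul_comm (ksign (i + 1)) (ksign (i * j))]
end

section
/- Let A be a ℤ₂-graded commutative algebra with an odd derivation Q satisfying Q ∘ Q = 0 (the algebraic model of a Q-manifold, i.e., an odd Jacobi structure with trivial almost Schouten structure S = 0). Define ⟦f,g⟧_Q := (−1)^{|f|} Q(fg) and the associated Loday–Poisson bracket {f,g}_Q := (−1)^{|f|+1} ⟦Q(f),g⟧_Q. Then for all homogeneous f, g, h ∈ A: (a) {f,g}_Q = (−1)^{|f|+1} Q(f) Q(g); (b) {·,·}_Q is skewsymmetric, {f,g}_Q = −(−1)^{|f||g|} {g,f}_Q, hence is a genuine even Poisson bracket: it satisfies the Jacobi–Loday identity {f,{g,h}_Q}_Q = {{f,g}_Q,h}_Q + (−1)^{|f||g|}{g,{f,h}_Q}_Q and the Leibniz rule {f,gh}_Q = {f,g}_Q h + (−1)^{|f||g|} g {f,h}_Q. -/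
/-- A ℤ₂-graded commutative ℝ-algebra `A = A₀ ⊕ A₁` (with unit `1 ∈ A₀` and
`f * g = (−1)^{|f||g|} g * f` for homogeneous `f`, `g`) equipped with an
ℝ-linear odd derivation `Q` satisfying `Q ∘ Q = 0` (the algebraic model of a
Q-manifold). -/
structure SuperQAlgebra (A : Type*) [Ring A] [Algebra ℝ A] where
  /-- the grading -/
  grade : ZMod 2 → Submodule ℝ A
  /-- `A = A₀ ⊕ A₁` -/
  internal : DirectSum.IsInternal grade
  /-- the unit is even -/
  one_mem : (1 : A) ∈ grade 0
  /-- graded commutativity -/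
  supercomm : ∀ (i j : ZMod 2) (f g : A), f ∈ grade i → g ∈ grade j →
    f * g = ksign (i * j) • (g * f)
  /-- the homological vector field `Q` -/
  Q : A →ₗ[ℝ] A
  /-- `Q` has odd parity -/
  Q_parity : ∀ (i : ZMod 2) (f : A), f ∈ grade i → Q f ∈ grade (i + 1)
  /-- `Q` is an odd derivation -/
  Q_der : ∀ (i j : ZMod 2) (f g : A), f ∈ grade i → g ∈ grade j →
    Q (f * g) = Q f * g + ksign i • (f * Q g)
  /-- `Q` is homological: `Q ∘ Q = 0` -/
  Q_sq : ∀ f : A, Q (Q f) = 0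

namespace SuperQAlgebra

variable {A : Type*} [Ring A] [Algebra ℝ A]

/-- The odd Jacobi bracket `⟦f,g⟧_Q := (−1)^{|f|} Q(fg)` generated by `Q`,
where `i` is the parity of `f`. -/
def brQ (J : SuperQAlgebra A) (i : ZMod 2) (f g : A) : A :=
  ksign i • J.Q (f * g)

/-- The Loday–Poisson bracket `{f,g}_Q := (−1)^{|f|+1} ⟦Q(f),g⟧_Q`,
where `i` is the parity of `f` (so `Q(f)` has parity `i+1`). -/
def lpQ (J : SuperQAlgebra A) (i : ZMod 2) (f g : A) : A :=
  ksign (i + 1) • J.brQ (i + 1) (J.Q f) g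

/-- The derived product `f ∗ g := (−1)^{|f|+1} Q(f) g`, where `i` is the parity of `f`. -/
def dp (J : SuperQAlgebra A) (i : ZMod 2) (f g : A) : A :=
  ksign (i + 1) • (J.Q f * g)

end SuperQAlgebra

namespace SuperQAlgebra
variable {A : Type*} [Ring A] [Algebra ℝ A]

lemma ksq (a : ZMod 2) : ksign a * ksign a = 1 := by revert a; decide

lemma sgn1 : ∀ i j : ZMod 2,
    ksign (i+1) * ksign ((i+1)*(j+1)) = -(ksign (i*j) * ksign (j+1)) := by decide

lemma sgn2 : ∀ i j : ZMod 2,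
    ksign (i+1) * ksign j * ksign ((i+1)*j) = ksign (i*j) * ksign (i+1) := by decide

/-- The derivation property of `Q` with arbitrary (not necessarily homogeneous)
second factor, by linearity and `A = ⨆ p, grade p`. -/
lemma Q_der' (J : SuperQAlgebra A) (i : ZMod 2) (f : A) (hf : f ∈ J.grade i) (g : A) :
    J.Q (f * g) = J.Q f * g + ksign i • (f * J.Q g) := by
  have hg : g ∈ ⨆ p, J.grade p := by
    rw [J.internal.submodule_iSup_eq_top]; trivial
  refine Submodule.iSup_induction (motive := fun x => J.Q (f * x) = J.Q f * x + ksign i • (f * J.Q x))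
    _ hg (fun p x hx => J.Q_der i p f x hf hx) (by simp) ?_
  intro x y hx hy
  simp only [mul_add, map_add, hx, hy, smul_add]
  abel

/-- The signs in `lpQ` cancel: `{f,g}_Q = Q(Q(f) * g)`. -/
lemma key (J : SuperQAlgebra A) (i : ZMod 2) (f g : A) :
    J.lpQ i f g = J.Q (J.Q f * g) := by
  rw [lpQ, brQ, smul_smul, ksq, one_smul]

lemma lpA (J : SuperQAlgebra A) (i : ZMod 2) (f : A) (hf : f ∈ J.grade i) (g : A) :
    J.lpQ i f g = ksign (i + 1) • (J.Q f * J.Q g) := by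
  rw [key, J.Q_der' (i+1) _ (J.Q_parity i f hf), J.Q_sq, zero_mul, zero_add]

lemma Qzz (J : SuperQAlgebra A) (p : ZMod 2) (u v : A) (hu : u ∈ J.grade p) :
    J.Q (J.Q u * J.Q v) = 0 := by
  rw [J.Q_der' (p+1) _ (J.Q_parity p u hu), J.Q_sq, J.Q_sq, zero_mul, mul_zero, smul_zero,
    add_zero]

end SuperQAlgebra

/-- On a Q-manifold (odd Jacobi structure with `S = 0`), the Loday–Poisson
bracket derived from `⟦f,g⟧_Q := (−1)^{|f|} Q(fg)` satisfies, for homogeneous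
`f,g,h`: (a) `{f,g}_Q = (−1)^{|f|+1} Q(f) Q(g)`; (b) it is skewsymmetric,
`{f,g}_Q = −(−1)^{|f||g|} {g,f}_Q`, hence a genuine even Poisson bracket:
it satisfies the Jacobi–Loday identity and the Leibniz rule. -/
theorem qManifold_lodayPoisson {A : Type*} [Ring A] [Algebra ℝ A]
    (J : SuperQAlgebra A) (i j k : ZMod 2) (f g h : A)
    (hf : f ∈ J.grade i) (hg : g ∈ J.grade j) (hh : h ∈ J.grade k) :
    J.lpQ i f g = ksign (i + 1) • (J.Q f * J.Q g) ∧
    J.lpQ i f g = -(ksign (i * j) • J.lpQ j g f) ∧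
    J.lpQ i f (J.lpQ j g h) =
      J.lpQ (i + j) (J.lpQ i f g) h + ksign (i * j) • J.lpQ j g (J.lpQ i f h) ∧
    J.lpQ i f (g * h) = J.lpQ i f g * h + ksign (i * j) • (g * J.lpQ i f h) := by
  refine ⟨J.lpA i f hf g, ?_, ?_, ?_⟩
  · rw [J.lpA i f hf g, J.lpA j g hg f,
      J.supercomm (i+1) (j+1) _ _ (J.Q_parity i f hf) (J.Q_parity j g hg),
      smul_smul, smul_smul, ← neg_smul]
    congr 1
    exact SuperQAlgebra.sgn1 i j
  · have h1 : J.lpQ i f (J.lpQ j g h) = 0 := by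
      rw [SuperQAlgebra.key, J.lpA j g hg h, mul_smul_comm, map_zsmul,
        J.Q_der' (i+1) _ (J.Q_parity i f hf), J.Q_sq, zero_mul, zero_add,
        J.Qzz j g h hg, mul_zero, smul_zero, smul_zero]
    have h2 : J.lpQ (i+j) (J.lpQ i f g) h = 0 := by
      rw [SuperQAlgebra.key, SuperQAlgebra.key, J.Q_sq, zero_mul, map_zero]
    have h3 : J.lpQ j g (J.lpQ i f h) = 0 := by
      rw [SuperQAlgebra.key, J.lpA i f hf h, mul_smul_comm, map_zsmul,
        J.Q_der' (j+1) _ (J.Q_parity j g hg), J.Q_sq, zero_mul, zero_add,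
        J.Qzz i f h hf, mul_zero, smul_zero, smul_zero]
    rw [h1, h2, h3, smul_zero, add_zero]
  · rw [SuperQAlgebra.key, J.Q_der' (i+1) _ (J.Q_parity i f hf), J.Q_sq, zero_mul, zero_add,
      J.Q_der' j g hg h, J.lpA i f hf g, J.lpA i f hf h]
    have sc : J.Q f * g = ksign ((i+1)*j) • (g * J.Q f) :=
      J.supercomm (i+1) j _ _ (J.Q_parity i f hf) hg
    rw [mul_add, mul_smul_comm, ← mul_assoc (J.Q f) g (J.Q h), sc, smul_mul_assoc,
      mul_assoc, smul_add, smul_smul, smul_smul, smul_mul_assoc, mul_smul_comm, smul_smul,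
      ← mul_assoc (J.Q f) (J.Q g) h]
    congr 1
    congr 1
    exact SuperQAlgebra.sgn2 i j
end

section
/- Let (A, ⟦·,·⟧, Q) be a ℤ₂-graded commutative algebra equipped with an odd Jacobi structure. For every homogeneous f ∈ A, the Hamiltonian operator Y_f of f with respect to the Loday–Poisson bracket satisfies Y_f = X_{Q(f)} = −[Q, X_f], where X_{Q(f)} is the Hamiltonian operator of Q(f) with respect to the odd Jacobi structure and [Q, X_f] is the supercommutator. -/
lemma key_homog {A : Type*} [Ring A] [Algebra ℝ A]
    (J : OddJacobiAlgebra A) (i j : ZMod 2) (f g : A)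
    (hf : f ∈ J.grade i) (hg : g ∈ J.grade j) :
    J.X (i + 1) (J.Q f) g = -(scomm 1 (i + 1) (fun a => J.Q a) (J.X i f) g) := by
  simp only [OddJacobiAlgebra.X, scomm]
  rw [J.Q_sq, map_sub, map_zsmul, J.Q_jacobi i j f g hf hg,
      J.Q_der (i + 1) j _ g (J.Q_parity i f hf) hg, J.Q_sq]
  have h1 : ∀ k : ZMod 2, ksign (1 * (k + 1)) = -ksign k := by decide
  have h2 : ∀ k : ZMod 2, ksign (k + 1) = -ksign k := by decide
  have hs : ∀ k : ZMod 2, ksign k * ksign k = 1 := by decide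
  simp only [h1, h2, hs, neg_smul, smul_neg, neg_neg, smul_smul, one_smul, sub_zero,
    zero_mul, smul_sub, smul_add]
  abel_nf
  have hc : (-1 : ℤ) • ksign i * ksign i = -1 := by
    rw [smul_eq_mul, mul_assoc, hs i]; ring
  rw [hc]
  simp

lemma sides_additive_aux : True := trivial

/-- For homogeneous `f`, the Hamiltonian operator `Y_f` with respect to the
Loday–Poisson bracket satisfies `Y_f = X_{Q(f)} = −[Q, X_f]`, where `[·,·]` is
the supercommutator (`Q` has parity `1`, `X_f` parity `|f|+1`). -/
theorem hamiltonian_Y_eq_X_Q {A : Type*} [Ring A] [Algebra ℝ A]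
    (J : OddJacobiAlgebra A) (i : ZMod 2) (f : A) (hf : f ∈ J.grade i) :
    J.Y i f = J.X (i + 1) (J.Q f) ∧
    J.X (i + 1) (J.Q f) = -(scomm 1 (i + 1) (fun a => J.Q a) (J.X i f)) := by
  constructor
  · funext g
    simp only [OddJacobiAlgebra.Y, OddJacobiAlgebra.lp, OddJacobiAlgebra.X, J.Q_sq,
      zero_mul, sub_zero]
  · funext g
    have hg : g ∈ (⊤ : Submodule ℝ A) := Submodule.mem_top
    rw [← J.internal.submodule_iSup_eq_top] at hg
    refine Submodule.iSup_induction (motive := fun g =>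
        J.X (i + 1) (J.Q f) g = -(scomm 1 (i + 1) (fun a => J.Q a) (J.X i f) g))
      J.grade hg (fun j g hgj => key_homog J i j f g hf hgj) ?_ ?_
    · simp only [OddJacobiAlgebra.X, scomm, map_zero, mul_zero, smul_zero, sub_zero,
        sub_self, neg_zero]
    · intro x y hx hy
      have expand : ∀ z : A, J.X (i + 1) (J.Q f) z
          + (scomm 1 (i + 1) (fun a => J.Q a) (J.X i f) z) = 0 → True := fun _ _ => trivial
      have hXadd : ∀ (k : ZMod 2) (u : A) (a b : A), J.X k u (a + b) = J.X k u a + J.X k u b := by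
        intro k u a b
        simp only [OddJacobiAlgebra.X, map_add, smul_add, mul_add]
        abel
      have hSadd : ∀ a b : A, scomm 1 (i + 1) (fun a => J.Q a) (J.X i f) (a + b)
          = scomm 1 (i + 1) (fun a => J.Q a) (J.X i f) a
            + scomm 1 (i + 1) (fun a => J.Q a) (J.X i f) b := by
        intro a b
        simp only [scomm, hXadd, map_add, smul_add]
        abel
      rw [hXadd, hSadd, hx, hy, neg_add]
end

section
/- Let (A, ⟦·,·⟧, Q) be a ℤ₂-graded commutative algebra equipped with an odd Jacobi structure. If f ∈ A₀ is an even element satisfying the classical master equation ⟦f,f⟧ = 0, then {f,f} = 0, ⟦Q(f),f⟧ = 0, and {f,Q(f)} = 0, where {·,·} is the Loday–Poisson bracket. -/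
/-- If an even element `f` satisfies the classical master equation `⟦f,f⟧ = 0`,
then `{f,f} =ated0`, `⟦Q(f),f⟧ = 0`, and `{f, Q(f)} = 0`. -/
theorem classical_master_equation {A : Type*} [Ring A] [Algebra ℝ A]
    (J : OddJacobiAlgebra A) (f : A) (hf : f ∈ J.grade 0)
    (hcme : J.br f f = 0) :
    J.lp 0 f f = 0 ∧ J.br (J.Q f) f = 0 ∧ J.lp 0 f (J.Q f) = 0 := by
  have hQf : J.Q f ∈ J.grade 1 := by simpa using J.Q_parity 0 f hf
  have h7 := J.Q_jacobi 0 0 f f hf hf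
  rw [hcme] at h7
  have hskew := J.br_skew 0 1 f (J.Q f) hf hQf
  have hk1 : ksign (0 + 1 : ZMod 2) = -1 := by decide
  have hk0 : ksign (((0:ZMod 2) + 1) * (1 + 1)) = 1 := by decide
  simp only [hk1, hk0, one_smul, neg_smul, neg_neg, map_zero] at h7 hskew
  rw [hskew] at h7
  have h2 : (2 : ℝ) • J.br (J.Q f) f = 0 := by
    rw [two_smul]
    linear_combination (norm := module) -h7
  have hbrQff : J.br (J.Q f) f = 0 := by
    have := congrArg (fun x => (2⁻¹ : ℝ) • x) h2
    simpa [smul_smul] using this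
  refine ⟨?_, hbrQff, ?_⟩
  · simp [OddJacobiAlgebra.lp, hbrQff]
  · have h7' := J.Q_jacobi 1 0 (J.Q f) f hQf hf
    rw [hbrQff, J.Q_sq] at h7'
    simp only [map_zero, map_zero, LinearMap.zero_apply, zero_add] at h7'
    have hk : ksign ((1:ZMod 2) + 1) = 1 := by decide
    rw [hk, one_smul] at h7'
    simp [OddJacobiAlgebra.lp, ← h7']
end

section
/- Let (A, ⟦·,·⟧, Q) be a ℤ₂-graded commutative algebra equipped with an odd Jacobi structure. For every homogeneous f ∈ A, the Hamiltonian operator Y_f with respect to the Loday–Poisson bracket supercommutes with Q: [Q, Y_f] = 0, i.e., Q ∘ Y_f = (−1)^{|f|} Y_f ∘ Q. -/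
/-- For homogeneous `f`, the Hamiltonian operator `Y_f` with respect to the
Loday–Poisson bracket supercommutes with `Q`: `[Q, Y_f] = 0`. -/
theorem hamiltonian_Y_commutes_Q {A : Type*} [Ring A] [Algebra ℝ A]
    (J : OddJacobiAlgebra A) (i : ZMod 2) (f : A) (hf : f ∈ J.grade i) :
    scomm 1 i (fun a => J.Q a) (J.Y i f) = 0 := by
  have h2 : i + 1 + 1 = i := by rw [add_assoc]; norm_num; decide
  set L : A →ₗ[ℝ] A := J.Q ∘ₗ (J.br (J.Q f)) - ksign i • ((J.br (J.Q f)) ∘ₗ J.Q) with hL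
  have hker : ∀ j, J.grade j ≤ LinearMap.ker L := by
    intro j g hg
    have hj := J.Q_jacobi (i + 1) j (J.Q f) g (J.Q_parity i f hf) hg
    rw [J.Q_sq f, map_zero, LinearMap.zero_apply, zero_add, h2] at hj
    simp [hL, LinearMap.mem_ker, sub_eq_zero, hj]
  have htop : ∀ g : A, L g = 0 := by
    intro g
    have : g ∈ LinearMap.ker L := by
      have : (⨆ j, J.grade j) ≤ LinearMap.ker L := iSup_le hker
      exact this (J.internal.submodule_iSup_eq_top ▸ Submodule.mem_top)
    exact this
  have key : ∀ g : A, J.Q (J.br (J.Q f) g) = ksign i • J.br (J.Q f) (J.Q g) := by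
    intro g
    have := htop g
    simp only [hL, LinearMap.sub_apply, LinearMap.smul_apply, LinearMap.comp_apply,
      sub_eq_zero] at this
    exact this
  funext g
  show J.Q (J.Y i f g) - ksign (1 * i) • J.Y i f (J.Q g) = 0
  have h1i : (1 : ZMod 2) * i = i := one_mul i
  simp only [OddJacobiAlgebra.Y, OddJacobiAlgebra.lp, h1i, map_zsmul, key g, sub_eq_zero]
  rw [smul_comm]
end

section
/- Let (A, ⟦·,·⟧, Q) be a ℤ₂-graded commutative algebra equipped with an odd Jacobi structure. For every homogeneous f ∈ A, the Hamiltonian operator Y_f with respect to the Loday–Poisson bracket is a derivation of the odd Jacobi bracket (i.e., a Jacobi vector field): for all homogeneous g, h ∈ A, Y_f(⟦g,h⟧) = ⟦Y_f(g), h⟧ + (−1)^{|f|(|g|+1)} ⟦g, Y_f(h)⟧. -/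
/-- For homogeneous `f`, the Hamiltonian operator `Y_f` with respect to the
Loday–Poisson bracket is a Jacobi vector field, i.e. a derivation of the odd
Jacobi bracket: `Y_f(⟦g,h⟧) = ⟦Y_f(g),h⟧ + (−1)^{|f|(|g|+1)} ⟦g,Y_f(h)⟧`. -/
theorem hamiltonian_Y_jacobi_derivation {A : Type*} [Ring A] [Algebra ℝ A]
    (J : OddJacobiAlgebra A) (i j k : ZMod 2) (f g h : A)
    (hf : f ∈ J.grade i) (hg : g ∈ J.grade j) (hh : h ∈ J.grade k) :
    J.Y i f (J.br g h) =
      J.br (J.Y i f g) h + ksign (i * (j + 1)) • J.br g (J.Y i f h) := by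
  have hQf := J.Q_parity i f hf
  have hJ := J.br_jacobi (i+1) j k (J.Q f) g h hQf hg hh
  have h2 : (i+1)+1 = i := by
    have h1 : (1:ZMod 2)+1 = 0 := by decide
    rw [add_assoc, h1, add_zero]
  rw [h2] at hJ
  show ksign (i+1) • J.br (J.Q f) (J.br g h) = _
  rw [hJ, smul_add, smul_comm (ksign (i+1)) (ksign (i*(j+1)))]
  congr 1
  · show _ = J.br (ksign (i+1) • J.br (J.Q f) g) h
    rw [map_zsmul J.br (ksign (i+1)) (J.br (J.Q f) g), LinearMap.smul_apply]
  · congr 1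
    show _ = J.br g (ksign (i+1) • J.br (J.Q f) h)
    rw [map_zsmul (J.br g) (ksign (i+1)) (J.br (J.Q f) h)]
end

section
/- Let (A, ⟦·,·⟧, Q) be a ℤ₂-graded commutative algebra equipped with an odd Jacobi structure. The assignment f ↦ Y_f of Hamiltonian operators with respect to the Loday–Poisson bracket is a morphism of brackets: for all homogeneous f, g ∈ A, [Y_f, Y_g] = Y_{{f,g}}, where [·,·] is the supercommutator of operators. -/

lemma ksign_mul_ksign : ∀ a b : ZMod 2, ksign a * ksign b = ksign (a + b) := by decide

lemma zmod2_add_two : ∀ a : ZMod 2, a + 1 + 1 = a := by decide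

/-- The assignment `f ↦ Y_f` is a morphism of brackets:
`[Y_f, Y_g] = Y_{{f,g}}` for homogeneous `f,g` (the Loday–Poisson bracket
`{f,g}` has parity `|f|+|g|`). -/
theorem hamiltonian_Y_morphism {A : Type*} [Ring A] [Algebra ℝ A]
    (J : OddJacobiAlgebra A) (i j : ZMod 2) (f g : A)
    (hf : f ∈ J.grade i) (hg : g ∈ J.grade j) :
    scomm i j (J.Y i f) (J.Y j g) = J.Y (i + j) (J.lp i f g) := by
  funext h
  have hQf := J.Q_parity i f hf
  have hQg := J.Q_parity j g hg
  -- compute Q of the Loday-Poisson bracket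
  have hQlp : J.Q (J.br (J.Q f) g) = ksign i • J.br (J.Q f) (J.Q g) := by
    have := J.Q_jacobi (i+1) j (J.Q f) g hQf hg
    rw [J.Q_sq f] at this
    simpa [zmod2_add_two] using this
  have htop : h ∈ (⊤ : Submodule ℝ A) := trivial
  rw [← J.internal.submodule_iSup_eq_top] at htop
  induction htop using Submodule.iSup_induction' with
  | mem k h hk =>
    have hjac := J.br_jacobi (i+1) (j+1) k (J.Q f) (J.Q g) h hQf hQg hk
    rw [zmod2_add_two, zmod2_add_two] at hjac
    show J.Y i f (J.Y j g h) - ksign (i*j) • J.Y j g (J.Y i f h)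
        = J.Y (i+j) (J.lp i f g) h
    simp only [OddJacobiAlgebra.Y, OddJacobiAlgebra.lp, map_zsmul,
      LinearMap.map_smul_of_tower, hQlp, LinearMap.smul_apply, smul_smul,
      ksign_mul_ksign, hjac, smul_add, smul_sub]
    have L : ∀ a b : ZMod 2, ksign (a+1+(b+1)) = ksign (a+b+1+(a+1+a)) ∧
        ksign (a+1+(b+1+a*b)) = ksign (a*b+(b+1+(a+1))) := by decide
    rw [(L i j).1, (L i j).2]
    abel
  | zero =>
    show J.Y i f (J.Y j g 0) - ksign (i*j) • J.Y j g (J.Y i f 0)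
        = J.Y (i+j) (J.lp i f g) 0
    simp [OddJacobiAlgebra.Y, OddJacobiAlgebra.lp]
  | add x y hx hy ihx ihy =>
    show J.Y i f (J.Y j g (x+y)) - ksign (i*j) • J.Y j g (J.Y i f (x+y))
        = J.Y (i+j) (J.lp i f g) (x+y)
    have hx' : J.Y i f (J.Y j g x) - ksign (i*j) • J.Y j g (J.Y i f x)
        = J.Y (i+j) (J.lp i f g) x := ihx
    have hy' : J.Y i f (J.Y j g y) - ksign (i*j) • J.Y j g (J.Y i f y)
        = J.Y (i+j) (J.lp i f g) y := ihy
    simp only [OddJacobiAlgebra.Y, OddJacobiAlgebra.lp, map_add, smul_add] at *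
    rw [← hx', ← hy']
    abel
end

section
/- Let (A, ⟦·,·⟧, Q) be a ℤ₂-graded commutative algebra equipped with an odd Jacobi structure. For all homogeneous f, g ∈ A, the mixed supercommutator of Hamiltonian operators satisfies [Y_f, X_g] = (−1)^{|f|} X_{{f,g}}, where Y_f is the Hamiltonian operator of f with respect to the Loday–Poisson bracket and X_g, X_{{f,g}} are Hamiltonian operators with respect to the odd Jacobi structure. -/
private lemma ksign_smul_eq_zero' {A : Type*} [AddCommGroup A] (a : ZMod 2) (x : A)
    (h : ksign a • x = 0) : x = 0 := by
  rcases (by decide : ∀ b : ZMod 2, ksign b = 1 ∨ ksign b = -1) a with h1 | h1 <;>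
    rw [h1] at h <;> simpa [neg_smul] using h

private lemma hamiltonian_mixed_commutator_key {A : Type*} [Ring A] [Algebra ℝ A]
    (J : OddJacobiAlgebra A) (i j k : ZMod 2) (f g h : A)
    (hf : f ∈ J.grade i) (hg : g ∈ J.grade j) (hh : h ∈ J.grade k) :
    J.Y i f (J.X j g h) - ksign (i * (j+1)) • J.X j g (J.Y i f h)
      = ksign i • J.X (i + j) (J.lp i f g) h := by
  have hq : J.Q f ∈ J.grade (i + 1) := J.Q_parity i f hf
  have hQg : J.Q g ∈ J.grade (j + 1) := J.Q_parity j g hg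
  have hq1 : J.br (J.Q f) 1 = 0 := by
    apply ksign_smul_eq_zero' (i + 1)
    rw [← J.Q_br_one (i+1) (J.Q f) hq, J.Q_sq]
  have jac := J.br_jacobi (i+1) j k (J.Q f) g h hq hg hh
  have leib := J.br_leibniz (i+1) (j+1) k (J.Q f) (J.Q g) h hq hQg hh
  have qjac := J.Q_jacobi (i+1) j (J.Q f) g hq hg
  rw [J.Q_sq, (J.br).map_zero, LinearMap.zero_apply, zero_add] at qjac
  rw [hq1, zero_mul, sub_zero] at leib
  simp only [OddJacobiAlgebra.Y, OddJacobiAlgebra.X, OddJacobiAlgebra.lp,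
    map_sub, map_zsmul, LinearMap.sub_apply, LinearMap.smul_apply, smul_sub,
    mul_smul_comm, qjac]
  rw [jac, leib]
  simp only [smul_smul, smul_mul_assoc, smul_sub, smul_add]
  match_scalars <;> fin_cases i <;> fin_cases j <;> decide

/-- Mixed supercommutator of Hamiltonian operators:
`[Y_f, X_g] = (−1)^{|f|} X_{{f,g}}` for homogeneous `f,g` (`Y_f` has parity
`|f|`, `X_g` parity `|g|+1`, and `{f,g}` parity `|f|+|g|`). -/
theorem hamiltonian_mixed_commutator {A : Type*} [Ring A] [Algebra ℝ A]
    (J : OddJacobiAlgebra A) (i j : ZMod 2) (f g : A)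
    (hf : f ∈ J.grade i) (hg : g ∈ J.grade j) :
    scomm i (j + 1) (J.Y i f) (J.X j g) = ksign i • J.X (i + j) (J.lp i f g) := by
  have hYl : ∀ x : A, J.Y i f x = (ksign (i+1) • J.br (J.Q f)) x := by
    intro x; simp [OddJacobiAlgebra.Y, OddJacobiAlgebra.lp]
  have hXl : ∀ x : A,
      J.X j g x = (ksign j • J.br g - LinearMap.mulLeft ℝ (J.Q g)) x := by
    intro x; simp [OddJacobiAlgebra.X]
  have hXl2 : ∀ x : A, J.X (i+j) (J.lp i f g) x
      = (ksign (i+j) • J.br (J.lp i f g)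
          - LinearMap.mulLeft ℝ (J.Q (J.lp i f g))) x := by
    intro x; simp [OddJacobiAlgebra.X]
  set Yl : A →ₗ[ℝ] A := ksign (i+1) • J.br (J.Q f) with hY
  set Xl : A →ₗ[ℝ] A := ksign j • J.br g - LinearMap.mulLeft ℝ (J.Q g) with hX
  set L : A →ₗ[ℝ] A := Yl ∘ₗ Xl - ksign (i*(j+1)) • (Xl ∘ₗ Yl) with hL
  set R : A →ₗ[ℝ] A := ksign i • (ksign (i+j) • J.br (J.lp i f g)
      - LinearMap.mulLeft ℝ (J.Q (J.lp i f g))) with hR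
  have hLR : ∀ x : A, L x = R x := by
    intro x
    have hx : x ∈ ⨆ k, J.grade k := by
      rw [J.internal.submodule_iSup_eq_top]; trivial
    refine Submodule.iSup_induction (motive := fun y => L y = R y) J.grade hx ?_ ?_ ?_
    · intro k y hy
      have := hamiltonian_mixed_commutator_key J i j k f g y hf hg hy
      rw [hYl, hXl, hYl, hXl, hXl2] at this
      simpa [hL, hR, LinearMap.comp_apply] using this
    · simp
    · intro a b ha hb
      rw [map_add, map_add, ha, hb]
  funext x
  have h1 : scomm i (j + 1) (J.Y i f) (J.X j g) x = L x := by
    simp only [scomm, hYl, hXl, hL, LinearMap.sub_apply, LinearMap.smul_apply,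
      LinearMap.comp_apply]
  have h2 : (ksign i • J.X (i + j) (J.lp i f g)) x = R x := by
    simp only [Pi.smul_apply, hXl2, hR, LinearMap.sub_apply, LinearMap.smul_apply]
  rw [h1, h2, hLR]
end

section
/- Let (A, ⟦·,·⟧, Q) be a ℤ₂-graded commutative algebra equipped with an odd Jacobi structure. For all homogeneous f, g ∈ A, (−1)^{|f|+1} Y_{⟦f,g⟧} = X_{{f,g}} + (−1)^{|f||g|} X_{{g,f}}, where X and Y denote Hamiltonian operators with respect to the odd Jacobi structure and the Loday–Poisson bracket respectively. -/
/-- For homogeneous `f,g`: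
`(−1)^{|f|+1} Y_{⟦f,g⟧} = X_{{f,g}} + (−1)^{|f||g|} X_{{g,f}}`
(the bracket `⟦f,g⟧` has parity `|f|+|g|+1`, and `{f,g}`, `{g,f}` have parity
`|f|+|g|`). -/
theorem hamiltonian_Y_of_br {A : Type*} [Ring A] [Algebra ℝ A]
    (J : OddJacobiAlgebra A) (i j : ZMod 2) (f g : A)
    (hf : f ∈ J.grade i) (hg : g ∈ J.grade j) :
    ksign (i + 1) • J.Y (i + j + 1) (J.br f g) =
      J.X (i + j) (J.lp i f g) + ksign (i * j) • J.X (i + j) (J.lp j g f) := by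
  funext h
  simp only [Pi.add_apply, Pi.smul_apply, OddJacobiAlgebra.Y, OddJacobiAlgebra.X, OddJacobiAlgebra.lp]
  rw [J.Q_jacobi i j f g hf hg]
  simp only [map_zsmul, LinearMap.smul_apply]
  rw [J.Q_jacobi (i+1) j (J.Q f) g (J.Q_parity i f hf) hg,
      J.Q_jacobi (j+1) i (J.Q g) f (J.Q_parity j g hg) hf,
      J.Q_sq, J.Q_sq]
  rw [J.br_skew i (j+1) f (J.Q g) hf (J.Q_parity j g hg)]
  rw [J.br_skew (j+1) (i+1) (J.Q g) (J.Q f) (J.Q_parity j g hg) (J.Q_parity i f hf)]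
  simp only [map_add, map_zsmul, map_neg, map_zero, LinearMap.add_apply, LinearMap.smul_apply,
    LinearMap.neg_apply, LinearMap.zero_apply, zero_add, smul_sub, smul_add, smul_neg,
    smul_smul, neg_mul, smul_mul_assoc]
  have v1 : ZMod.val (1 : ZMod 2) = 1 := rfl
  have v2 : ZMod.val (2 : ZMod 2) = 0 := rfl
  have v3 : ZMod.val (3 : ZMod 2) = 1 := rfl
  have v4 : ZMod.val (4 : ZMod 2) = 0 := rfl
  have v5 : ZMod.val (5 : ZMod 2) = 1 := rfl
  have v6 : ZMod.val (6 : ZMod 2) = 0 := rfl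
  have v7 : ZMod.val (7 : ZMod 2) = 1 := rfl
  have v8 : ZMod.val (8 : ZMod 2) = 0 := rfl
  have v9 : ZMod.val (9 : ZMod 2) = 1 := rfl
  fin_cases i <;> fin_cases j <;> simp (config := {decide := true}) [ksign, ZMod.val]
end

section
/- Let (A, ⟦·,·⟧, Q) be a ℤ₂-graded commutative algebra equipped with an odd Jacobi structure. For all homogeneous f, g ∈ A: (1) [Q, X_{{f,g}}] = −[Y_f, Y_g] = −Y_{{f,g}}; and (2) [Q, Y_{⟦f,g⟧}] = 0, where [·,·] is the supercommutator of operators, and X and Y denote Hamiltonian operators with respect to the odd Jacobi structure and the Loday–Poisson bracket respectively. -/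
section Aux

variable {A : Type*} [Ring A] [Algebra ℝ A]

private lemma two_cancel (x : ZMod 2) : x + 1 + 1 = x := by
  have h : (1 : ZMod 2) + 1 = 0 := by decide
  rw [add_assoc, h, add_zero]

private lemma ksign_one : ksign 1 = -1 := by decide

private lemma ksign_succ : ∀ k : ZMod 2, ksign (k + 1) = -ksign k := by decide

private lemma ksign_add : ∀ k l : ZMod 2, ksign (k + l) = ksign k * ksign l := by decide

private lemma grade_induction (J : OddJacobiAlgebra A) {p : A → Prop} (h0 : p 0)
    (hadd : ∀ x y, p x → p y → p (x + y))
    (hhom : ∀ (k : ZMod 2) (a : A), a ∈ J.grade k → p a) (a : A) : p a := by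
  have ha : a ∈ (⨆ k, J.grade k) := by
    rw [J.internal.submodule_iSup_eq_top]; exact Submodule.mem_top
  exact Submodule.iSup_induction (motive := p) _ ha hhom h0 hadd

private lemma Q_jacobi' (J : OddJacobiAlgebra A) (p : ZMod 2) (F : A) (hF : F ∈ J.grade p)
    (a : A) :
    J.Q (J.br F a) = J.br (J.Q F) a + ksign (p + 1) • J.br F (J.Q a) := by
  refine grade_induction J
    (p := fun a => J.Q (J.br F a) = J.br (J.Q F) a + ksign (p + 1) • J.br F (J.Q a))
    ?_ ?_ ?_ a
  · simp
  · intro x y hx hy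
    simp only [map_add, hx, hy, smul_add]
    abel
  · intro k a ha
    exact J.Q_jacobi p k F a hF ha

private lemma Q_der' (J : OddJacobiAlgebra A) (p : ZMod 2) (F : A) (hF : F ∈ J.grade p)
    (a : A) :
    J.Q (F * a) = J.Q F * a + ksign p • (F * J.Q a) := by
  refine grade_induction J
    (p := fun a => J.Q (F * a) = J.Q F * a + ksign p • (F * J.Q a)) ?_ ?_ ?_ a
  · simp
  · intro x y hx hy
    simp only [mul_add, map_add, hx, hy, smul_add]
    abel
  · intro k a ha
    exact J.Q_der p k F a hF ha

private lemma br_jacobi' (J : OddJacobiAlgebra A) (p q : ZMod 2) (F G : A)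
    (hF : F ∈ J.grade p) (hG : G ∈ J.grade q) (a : A) :
    J.br F (J.br G a) =
      J.br (J.br F G) a + ksign ((p + 1) * (q + 1)) • J.br G (J.br F a) := by
  refine grade_induction J
    (p := fun a => J.br F (J.br G a) =
      J.br (J.br F G) a + ksign ((p + 1) * (q + 1)) • J.br G (J.br F a)) ?_ ?_ ?_ a
  · simp
  · intro x y hx hy
    simp only [map_add, hx, hy, smul_add]
    abel
  · intro k a ha
    exact J.br_jacobi p q k F G a hF hG ha

end Aux

/-- For homogeneous `f,g`:
(1) `[Q, X_{{f,g}}] = −[Y_f, Y_g] = −Y_{{f,g}}`, and (2) `[Q, Y_{⟦f,g⟧}] = 0`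
(here `{f,g}` has parity `|f|+|g|`, so `X_{{f,g}}` has parity `|f|+|g|+1`, and
`⟦f,g⟧` has parity `|f|+|g|+1`). -/
theorem hamiltonian_Q_commutators {A : Type*} [Ring A] [Algebra ℝ A]
    (J : OddJacobiAlgebra A) (i j : ZMod 2) (f g : A)
    (hf : f ∈ J.grade i) (hg : g ∈ J.grade j) :
    (scomm 1 (i + j + 1) (fun a => J.Q a) (J.X (i + j) (J.lp i f g)) =
        -(scomm i j (J.Y i f) (J.Y j g)) ∧
      -(scomm i j (J.Y i f) (J.Y j g)) = -(J.Y (i + j) (J.lp i f g))) ∧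
    scomm 1 (i + j + 1) (fun a => J.Q a) (J.Y (i + j + 1) (J.br f g)) = 0 := by
  have hQf : J.Q f ∈ J.grade (i + 1) := J.Q_parity i f hf
  have hQg : J.Q g ∈ J.grade (j + 1) := J.Q_parity j g hg
  have hbrfg : J.br f g ∈ J.grade (i + j + 1) := J.br_parity i j f g hf hg
  have hQh : J.Q (J.br f g) ∈ J.grade (i + j) := by
    have := J.Q_parity _ _ hbrfg
    rwa [two_cancel] at this
  set F := J.lp i f g with hFdef
  have hF : F ∈ J.grade (i + j) := by
    have hb : J.br (J.Q f) g ∈ J.grade (i + 1 + j + 1) := J.br_parity _ _ _ _ hQf hg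
    have he : i + 1 + j + 1 = i + j := by
      rw [add_right_comm i 1 j]; exact two_cancel _
    rw [he] at hb
    rw [hFdef]
    exact zsmul_mem hb _
  have hQF : J.Q F = -(J.br (J.Q f) (J.Q g)) := by
    rw [hFdef]
    unfold OddJacobiAlgebra.lp
    rw [map_zsmul, J.Q_jacobi (i + 1) j (J.Q f) g hQf hg, J.Q_sq f]
    simp only [map_zero, LinearMap.zero_apply, zero_add, smul_smul]
    have hm : ∀ k : ZMod 2, ksign (k + 1) * ksign (k + 1 + 1) = -1 := by decide
    rw [hm i, neg_one_smul]
  have hQFmem : J.Q F ∈ J.grade (i + j + 1) := J.Q_parity _ _ hF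
  have h2 : scomm i j (J.Y i f) (J.Y j g) = J.Y (i + j) F := by
    funext a
    simp only [scomm, OddJacobiAlgebra.Y, OddJacobiAlgebra.lp, map_zsmul]
    rw [br_jacobi' J (i + 1) (j + 1) _ _ hQf hQg a, hQF]
    simp only [two_cancel, map_neg, LinearMap.neg_apply, smul_neg, smul_add, smul_smul,
      ksign_succ, ksign_add, ksign_one]
    module
  have h1 : scomm 1 (i + j + 1) (fun a => J.Q a) (J.X (i + j) F) = -(J.Y (i + j) F) := by
    funext a
    simp only [scomm, OddJacobiAlgebra.X, OddJacobiAlgebra.Y, OddJacobiAlgebra.lp, one_mul,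
      Pi.neg_apply]
    rw [map_sub, map_zsmul, Q_jacobi' J (i + j) _ hF a, Q_der' J (i + j + 1) _ hQFmem a,
      J.Q_sq]
    simp only [zero_mul, zero_add, ksign_succ, ksign_add, ksign_one]
    module
  have h3 : scomm 1 (i + j + 1) (fun a => J.Q a) (J.Y (i + j + 1) (J.br f g)) = 0 := by
    funext a
    simp only [scomm, OddJacobiAlgebra.Y, OddJacobiAlgebra.lp, one_mul, map_zsmul]
    rw [Q_jacobi' J (i + j) _ hQh a, J.Q_sq]
    simp only [map_zero, LinearMap.zero_apply, zero_add, two_cancel, Pi.zero_apply,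
      ksign_succ, ksign_add, ksign_one]
    module
  refine ⟨⟨?_, ?_⟩, h3⟩
  · rw [h2]; exact h1
  · rw [h2]
end

section
/- Let (A, ⟦·,·⟧, Q) be a ℤ₂-graded commutative algebra equipped with an odd Jacobi structure. The assignment f ↦ X_f is an anti-morphism from the odd Jacobi bracket to the supercommutator of operators: for all homogeneous f, g ∈ A, [X_f, X_g] = −X_{⟦f,g⟧}. -/
section AuxOddJacobi

lemma ksign_sq (i : ZMod 2) : ksign i * ksign i = 1 := by fin_cases i <;> decide
lemma kv0 : ((0:ZMod 2)).val = 0 := rfl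
lemma kv1 : ((1:ZMod 2)).val = 1 := rfl
lemma kv2 : ((2:ZMod 2)).val = 0 := rfl
lemma kv3 : ((3:ZMod 2)).val = 1 := rfl
lemma kv4 : ((4:ZMod 2)).val = 0 := rfl
lemma kv5 : ((5:ZMod 2)).val = 1 := rfl
lemma kv6 : ((6:ZMod 2)).val = 0 := rfl
lemma kv7 : ((7:ZMod 2)).val = 1 := rfl
lemma kv8 : ((8:ZMod 2)).val = 0 := rfl
lemma kv9 : ((9:ZMod 2)).val = 1 := rfl

/-- The key pointwise identity for homogeneous `h`. -/
lemma oddJacobi_core {A : Type*} [Ring A] [Algebra ℝ A] (J : OddJacobiAlgebra A)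
    (i j k : ZMod 2) (f g h : A) (hf : f ∈ J.grade i) (hg : g ∈ J.grade j)
    (hk : h ∈ J.grade k) :
    J.X i f (J.X j g h) - ksign ((i+1)*(j+1)) • J.X j g (J.X i f h)
      = -(J.X (i+j+1) (J.br f g) h) := by
  have hQf := J.Q_parity i f hf
  have hQg := J.Q_parity j g hg
  have jac := J.br_jacobi i j k f g h hf hg hk
  have leib1 := J.br_leibniz i (j+1) k f (J.Q g) h hf hQg hk
  have leib2 := J.br_leibniz j (i+1) k g (J.Q f) h hg hQf hk
  have q1 : J.br f 1 = ksign i • J.Q f := by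
    rw [J.Q_br_one i f hf, smul_smul, ksign_sq, one_smul]
  have q2 : J.br g 1 = ksign j • J.Q g := by
    rw [J.Q_br_one j g hg, smul_smul, ksign_sq, one_smul]
  have qj := J.Q_jacobi i j f g hf hg
  have sk := J.br_skew (i+1) j (J.Q f) g hQf hg
  have hcc : J.Q f * (J.Q g * h) = ksign ((i+1)*(j+1)) • (J.Q g * (J.Q f * h)) := by
    rw [← mul_assoc, J.supercomm (i+1) (j+1) (J.Q f) (J.Q g) hQf hQg,
      smul_mul_assoc, mul_assoc]
  simp only [OddJacobiAlgebra.X, map_sub, map_zsmul, smul_sub, mul_sub]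
  rcases (show ∀ x : ZMod 2, x = 0 ∨ x = 1 by decide) i with rfl | rfl <;>
    rcases (show ∀ x : ZMod 2, x = 0 ∨ x = 1 by decide) j with rfl | rfl <;>
    norm_num [ksign, kv0, kv1, kv2, kv3, kv4, kv5, kv6, kv7, kv8, kv9, one_smul,
      neg_smul] at jac leib1 leib2 q1 q2 qj sk hcc ⊢ <;>
    rw [jac, leib1, leib2, qj, sk, q1, q2, hcc] <;>
    noncomm_ring [hcc]

lemma oddJacobi_X_zero {A : Type*} [Ring A] [Algebra ℝ A] (J : OddJacobiAlgebra A)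
    (i : ZMod 2) (f : A) : J.X i f 0 = 0 := by
  simp [OddJacobiAlgebra.X]

lemma oddJacobi_X_add {A : Type*} [Ring A] [Algebra ℝ A] (J : OddJacobiAlgebra A)
    (i : ZMod 2) (f a b : A) : J.X i f (a + b) = J.X i f a + J.X i f b := by
  simp only [OddJacobiAlgebra.X, map_add, smul_add, mul_add]
  abel

end AuxOddJacobi

/-- The assignment `f ↦ X_f` is an anti-morphism from the odd Jacobi bracket to
the supercommutator: `[X_f, X_g] = −X_{⟦f,g⟧}` for homogeneous `f,g` (`X_f` has
parity `|f|+1` and `⟦f,g⟧` has parity `|f|+|g|+1`). -/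
theorem hamiltonian_X_antimorphism {A : Type*} [Ring A] [Algebra ℝ A]
    (J : OddJacobiAlgebra A) (i j : ZMod 2) (f g : A)
    (hf : f ∈ J.grade i) (hg : g ∈ J.grade j) :
    scomm (i + 1) (j + 1) (J.X i f) (J.X j g) = -(J.X (i + j + 1) (J.br f g)) := by
  funext h
  show J.X i f (J.X j g h) - ksign ((i+1)*(j+1)) • J.X j g (J.X i f h)
      = -(J.X (i+j+1) (J.br f g) h)
  have htop : h ∈ ⨆ k, J.grade k := by
    rw [J.internal.submodule_iSup_eq_top]; trivial
  refine Submodule.iSup_induction (motive := fun h => J.X i f (J.X j g h) -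
      ksign ((i+1)*(j+1)) • J.X j g (J.X i f h) = -(J.X (i+j+1) (J.br f g) h))
    J.grade htop (fun k x hx => oddJacobi_core J i j k f g x hf hg hx) ?_ ?_
  · simp [oddJacobi_X_zero]
  · intro x y hx hy
    rw [oddJacobi_X_add, oddJacobi_X_add, oddJacobi_X_add, oddJacobi_X_add,
      oddJacobi_X_add, smul_add]
    rw [show ∀ a b c d : A, a + b - (c + d) = (a - c) + (b - d) by intros; abel]
    rw [hx, hy]; abel
end

section
/- Let A be a ℤ₂-graded commutative algebra and Q an odd derivation of A with Q ∘ Q = 0. Then the derived product f ∗ g := (−1)^{|f|+1} Q(f) g is associative: for all homogeneous f, g, h ∈ A, (f ∗ g) ∗ h = f ∗ (g ∗ h). -/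
/-- The derived product `f ∗ g := (−1)^{|f|+1} Q(f) g` on a ℤ₂-graded commutative
algebra with an odd homological derivation `Q` is associative (the element
`f ∗ g` has parity `|f|+|g|+1`). -/
theorem derived_product_assoc {A : Type*} [Ring A] [Algebra ℝ A]
    (J : SuperQAlgebra A) (i j k : ZMod 2) (f g h : A)
    (hf : f ∈ J.grade i) (hg : g ∈ J.grade j) (hh : h ∈ J.grade k) :
    J.dp (i + j + 1) (J.dp i f g) h = J.dp i f (J.dp j g h) := by
  have hsq : ∀ a : ZMod 2, ksign a * ksign a = 1 := by decide
  simp only [SuperQAlgebra.dp]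
  have calcQ : J.Q (ksign (i + 1) • (J.Q f * g)) = J.Q f * J.Q g := by
    rw [map_zsmul,
      J.Q_der (i + 1) j (J.Q f) g (J.Q_parity i f hf) hg, J.Q_sq, zero_mul, zero_add,
      smul_smul, hsq, one_smul]
  rw [calcQ, mul_smul_comm, smul_smul, mul_assoc]
  congr 1
  exact (by decide : ∀ a b : ZMod 2, ksign (a + b + 1 + 1) = ksign (a + 1) * ksign (b + 1)) i j
end

section
/- Let A be a ℤ₂-graded commutative algebra and Q an odd derivation of A with Q ∘ Q = 0. Then the graded commutator of the derived product equals minus the odd Jacobi bracket generated by Q: for all homogeneous f, g ∈ A, f ∗ g − (−1)^{(|f|+1)(|g|+1)} g ∗ f = −(−1)^{|f|} Q(fg). -/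
/-- The graded commutator of the derived product equals minus the odd Jacobi
bracket generated by `Q`:
`f ∗ g − (−1)^{(|f|+1)(|g|+1)} g ∗ f = −(−1)^{|f|} Q(fg)` for homogeneous `f,g`. -/
theorem derived_product_commutator {A : Type*} [Ring A] [Algebra ℝ A]
    (J : SuperQAlgebra A) (i j : ZMod 2) (f g : A)
    (hf : f ∈ J.grade i) (hg : g ∈ J.grade j) :
    J.dp i f g - ksign ((i + 1) * (j + 1)) • J.dp j g f = -(ksign i • J.Q (f * g)) := by
  have hQg := J.Q_parity j g hg
  have hcomm := J.supercomm i (j + 1) f (J.Q g) hf hQg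
  have s1 : ∀ i : ZMod 2, ksign (i + 1) = -ksign i := by decide
  have s2 : ∀ i j : ZMod 2,
      ksign ((i + 1) * (j + 1)) * ksign (j + 1) = ksign i * (ksign i * ksign (i * (j + 1))) := by
    decide
  rw [SuperQAlgebra.dp, SuperQAlgebra.dp, J.Q_der i j f g hf hg, hcomm]
  simp only [smul_add, smul_smul, s1 i, s2 i j]
  module
end
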